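/- arXiv:1802.04579 — 10 statements merged into one kernel-verified Lean document; each statement's English description precedes it below -/
import Mathlib

section
/- Let A ⊆ O be a semi-module. Then every element of O is congruent, by adding an integer multiple of n to its second coordinate, to exactly one element of Ā = A \ (A+n). In particular, for every a ∈ A there is a unique integer k such that f(a) - nk ∈ Ā. -/
/-- The set `O = (ℤ/dℤ) × ℤ`; shift the second coordinate by `k`. -/
def shiftO (d : ℕ) (a : ZMod d × ℤ) (k : ℤ) : ZMod d × ℤ := (a.1, a.2 + k)

/-- The map `f : O → O`, `f(τ, i) = (τ-1, i+m)` if `τ = 1`, else `(τ-1, i)`. -/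
def fO (d m : ℕ) (a : ZMod d × ℤ) : ZMod d × ℤ :=
  if a.1 = 1 then (a.1 - 1, a.2 + (m : ℤ)) else (a.1 - 1, a.2)

/-- `A ⊆ O` is a semi-module: bounded below in each component, `A + n ⊆ A`,
`f(A) ⊆ A`, and `O = A + nℤ`. -/
def IsSemiModule (d n m : ℕ) (A : Set (ZMod d × ℤ)) : Prop :=
  (∀ τ : ZMod d, ∃ N : ℤ, ∀ i : ℤ, (τ, i) ∈ A → N ≤ i) ∧
  (∀ a ∈ A, shiftO d a (n : ℤ) ∈ A) ∧
  (∀ a ∈ A, fO d m a ∈ A) ∧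
  (∀ x : ZMod d × ℤ, ∃ a ∈ A, ∃ k : ℤ, x = shiftO d a (k * (n : ℤ)))

/-- `Ā = A \ (A + n)`. -/
def Abar (d n : ℕ) (A : Set (ZMod d × ℤ)) : Set (ZMod d × ℤ) :=
  A \ ((fun a => shiftO d a (n : ℤ)) '' A)

/-- `O^k = {(τ, i) : i ≡ k (mod h)}` where `h = gcd(m, n)`. -/
def Omod (d h : ℕ) (k : ℤ) : Set (ZMod d × ℤ) := {a | (h : ℤ) ∣ (a.2 - k)}


/-- Every element of `O` is congruent modulo `nℤ` to exactly one element of `Ā`;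
in particular for every `a ∈ A` there is a unique `k` with `f(a) - nk ∈ Ā`. -/
theorem stmt0 (d n m : ℕ) (hd : 1 ≤ d) (hn : 1 ≤ n)
    (A : Set (ZMod d × ℤ)) (hA : IsSemiModule d n m A) :
    (∀ x : ZMod d × ℤ, ∃! b, b ∈ Abar d n A ∧ ∃ k : ℤ, x = shiftO d b (k * (n : ℤ))) ∧
    (∀ a ∈ A, ∃! k : ℤ, shiftO d (fO d m a) (-(k * (n : ℤ))) ∈ Abar d n A) := by
  obtain ⟨hbdd, hshift, hf, hcov⟩ := hA
  have hn0 : (0:ℤ) < (n:ℤ) := by exact_mod_cast hn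
  have hiter : ∀ (τ : ZMod d) (i : ℤ), (τ, i) ∈ A → ∀ t : ℕ, (τ, i + t * n) ∈ A := by
    intro τ i hi t
    induction t with
    | zero => simpa using hi
    | succ t ih =>
      have h2 := hshift _ ih
      simp only [shiftO] at h2
      convert h2 using 2
      push_cast; ring
  have main : ∀ x : ZMod d × ℤ, ∃! b, b ∈ Abar d n A ∧ ∃ k : ℤ, x = shiftO d b (k * (n:ℤ)) := by
    intro x
    obtain ⟨a, haA, k, hk⟩ := hcov x
    have hx1 : x.1 = a.1 := by rw [hk]; rfl
    have hx2 : x.2 = a.2 + k * n := by rw [hk]; rfl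
    set P : ℤ → Prop := fun i => (x.1, i) ∈ A ∧ (n:ℤ) ∣ (x.2 - i) with hP
    have hPinh : ∃ i, P i := by
      refine ⟨a.2, ?_, ?_⟩
      · have : (x.1, a.2) = a := by rw [hx1]
        rw [this]; exact haA
      · rw [hx2]; exact ⟨k, by ring⟩
    obtain ⟨N, hN⟩ := hbdd x.1
    obtain ⟨lb, hlbP, hlbmin⟩ := Int.exists_least_of_bdd (P := P)
      ⟨N, fun z hz => hN z hz.1⟩ hPinh
    have hbAbar : (x.1, lb) ∈ Abar d n A := by
      constructor
      · exact hlbP.1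
      · rintro ⟨c, hcA, hc⟩
        simp only [shiftO] at hc
        rw [Prod.mk.injEq] at hc
        obtain ⟨hc1, hc2⟩ := hc
        have hPc : P (lb - n) := by
          constructor
          · have : (x.1, lb - (n:ℤ)) = c := by
              rw [← hc1]
              refine Prod.ext rfl ?_
              simp; omega
            rw [this]; exact hcA
          · obtain ⟨c', hc'⟩ := hlbP.2
            exact ⟨c' + 1, by rw [show x.2 - (lb - n) = (x.2 - lb) + n by ring, hc']; ring⟩
        have := hlbmin _ hPc
        omega
    refine ⟨(x.1, lb), ⟨hbAbar, ?_⟩, ?_⟩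
    · obtain ⟨c, hc⟩ := hlbP.2
      refine ⟨c, Prod.ext rfl ?_⟩
      simp only [shiftO]
      linarith [hc]
    · rintro b' ⟨⟨hb'A, hb'nim⟩, k', hk'⟩
      have hb'1 : b'.1 = x.1 := by rw [hk']; rfl
      have hb'2 : x.2 = b'.2 + k' * n := by rw [hk']; rfl
      have hPb' : P b'.2 := by
        constructor
        · have : (x.1, b'.2) = b' := by rw [← hb'1]
          rw [this]; exact hb'A
        · exact ⟨k', by rw [hb'2]; ring⟩
      have hle := hlbmin _ hPb'
      rcases eq_or_lt_of_le hle with heq | hlt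
      · exact Prod.ext hb'1 heq.symm
      · exfalso
        obtain ⟨t, ht⟩ : (n:ℤ) ∣ (b'.2 - lb) := by
          obtain ⟨c1, hc1⟩ := hlbP.2
          obtain ⟨c2, hc2⟩ := hPb'.2
          exact ⟨c1 - c2, by rw [show b'.2 - lb = (x.2 - lb) - (x.2 - b'.2) by ring, hc1, hc2]; ring⟩
        have ht1 : 1 ≤ t := by nlinarith
        have hmem : (x.1, lb + ((t - 1).toNat : ℤ) * n) ∈ A := hiter _ _ hlbP.1 (t-1).toNat
        apply hb'nim
        refine ⟨(x.1, lb + ((t - 1).toNat : ℤ) * n), hmem, ?_⟩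
        rw [← hb'1]
        refine Prod.ext rfl ?_
        simp only [shiftO]
        have : ((t-1).toNat : ℤ) = t - 1 := Int.toNat_of_nonneg (by omega)
        rw [this]; nlinarith
  refine ⟨main, ?_⟩
  intro a haA
  obtain ⟨b, ⟨hbAbar, k, hk⟩, huniq⟩ := main (fO d m a)
  have hkey : ∀ k' : ℤ, shiftO d (fO d m a) (-(k' * n)) ∈ Abar d n A →
      shiftO d (fO d m a) (-(k' * n)) = b := by
    intro k' h
    refine huniq _ ⟨h, k', ?_⟩
    simp [shiftO]
  refine ⟨k, ?_, ?_⟩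
  · have : shiftO d (fO d m a) (-(k * n)) = b := by
      rw [hk]; simp [shiftO]
    show shiftO d (fO d m a) (-(k * (n:ℤ))) ∈ Abar d n A
    rw [this]; exact hbAbar
  · intro k' h
    have h1 := hkey _ h
    have h2 : (fO d m a).2 - k' * n = b.2 := congrArg Prod.snd h1
    have h3 : (fO d m a).2 = b.2 + k * n := by rw [hk]; rfl
    have : k' * n = k * n := by linarith
    exact mul_right_cancel₀ (by omega) this
end

section
/- Let A ⊆ O be a semi-module. Then for each τ ∈ ℤ/dℤ the set Ā_τ = Ā ∩ ({τ} × ℤ) has exactly n elements; consequently Ā has exactly nd elements. -/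
lemma add_mul_mem (d n m : ℕ) (A : Set (ZMod d × ℤ)) (hA : IsSemiModule d n m A)
    (τ : ZMod d) (i : ℤ) (h : (τ, i) ∈ A) (k : ℕ) : (τ, i + (k : ℤ) * (n : ℤ)) ∈ A := by
  induction k with
  | zero => simpa using h
  | succ k ih =>
      have h2 := hA.2.1 _ ih
      simp only [shiftO] at h2
      have : i + ((k : ℤ) + 1) * (n : ℤ) = i + (k : ℤ) * (n : ℤ) + (n : ℤ) := by ring
      rw [show ((k + 1 : ℕ) : ℤ) = (k : ℤ) + 1 by push_cast; ring, this]
      exact h2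

/-- Existence: each residue class mod `n` contains an element of `Ā_τ`. -/
lemma exists_bar (d n m : ℕ) (hn : 1 ≤ n) (A : Set (ZMod d × ℤ))
    (hA : IsSemiModule d n m A) (τ : ZMod d) (r : ℤ) :
    ∃ i : ℤ, (τ, i) ∈ Abar d n A ∧ (n : ℤ) ∣ i - r := by
  obtain ⟨N, hN⟩ := hA.1 τ
  have Hinh : ∃ z : ℤ, (τ, z) ∈ A ∧ (n : ℤ) ∣ z - r := by
    obtain ⟨a, haA, k, hk⟩ := hA.2.2.2 (τ, r)
    simp only [shiftO, Prod.ext_iff] at hk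
    refine ⟨a.2, ?_, ?_⟩
    · rw [hk.1, Prod.mk.eta]; exact haA
    · rw [show a.2 - r = -(k * (n : ℤ)) by omega]
      exact ⟨-k, by ring⟩
  obtain ⟨lb, ⟨hlbA, hlbd⟩, hmin⟩ :=
    Int.exists_least_of_bdd (P := fun z => (τ, z) ∈ A ∧ (n : ℤ) ∣ z - r)
      ⟨N, fun z hz => hN z hz.1⟩ Hinh
  refine ⟨lb, ⟨hlbA, ?_⟩, hlbd⟩
  rintro ⟨b, hbA, hb⟩
  simp only [shiftO, Prod.ext_iff] at hb
  have hb1 : b = (τ, lb - (n : ℤ)) := by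
    obtain ⟨b1, b2⟩ := b
    simp only at hb
    simp [hb.1, show b2 = lb - (n:ℤ) by omega]
  have : lb ≤ lb - (n : ℤ) := by
    refine hmin _ ⟨by rwa [hb1] at hbA, ?_⟩
    obtain ⟨c, hc⟩ := hlbd
    exact ⟨c - 1, by rw [show lb - (n:ℤ) - r = (lb - r) - n by ring, hc]; ring⟩
  omega

/-- Uniqueness: two elements of `Ā_τ` in the same class mod `n` are equal. -/
lemma bar_unique (d n m : ℕ) (hn : 1 ≤ n) (A : Set (ZMod d × ℤ))
    (hA : IsSemiModule d n m A) (τ : ZMod d) (i j : ℤ)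
    (hi : (τ, i) ∈ Abar d n A) (hj : (τ, j) ∈ Abar d n A)
    (hdvd : (n : ℤ) ∣ j - i) : i = j := by
  -- general claim: if i < j then contradiction
  have key : ∀ i j : ℤ, (τ, i) ∈ Abar d n A → (τ, j) ∈ Abar d n A →
      (n : ℤ) ∣ j - i → i < j → False := by
    intro i j hi hj hdvd hlt
    obtain ⟨k, hk⟩ := hdvd
    have hk1 : 1 ≤ k := by
      rcases lt_or_ge k 1 with h | h
      · exfalso; nlinarith [hk, show (1:ℤ) ≤ (n:ℤ) by exact_mod_cast hn]
      · exact h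
    have hmem : (τ, i + ((k - 1).toNat : ℤ) * (n : ℤ)) ∈ A :=
      add_mul_mem d n m A hA τ i hi.1 (k - 1).toNat
    have heq : i + ((k - 1).toNat : ℤ) * (n : ℤ) = j - (n : ℤ) := by
      rw [Int.toNat_of_nonneg (by omega)]; linear_combination -hk
    exact hj.2 ⟨(τ, j - (n : ℤ)), by rwa [heq] at hmem,
      by simp [shiftO]⟩
  rcases lt_trichotomy i j with h | h | h
  · exact absurd (key i j hi hj hdvd h) (by simp)
  · exact h
  · exact absurd (key j i hj hi (by obtain ⟨c, hc⟩ := hdvd; exact ⟨-c, by rw [mul_neg, ← hc]; ring⟩) h) (by simp)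

/-- Each `Ā_τ` has exactly `n` elements; `Ā` has exactly `nd` elements. -/
theorem stmt1 (d n m : ℕ) (hd : 1 ≤ d) (hn : 1 ≤ n)
    (A : Set (ZMod d × ℤ)) (hA : IsSemiModule d n m A) :
    (∀ τ : ZMod d, {i : ℤ | (τ, i) ∈ Abar d n A}.ncard = n) ∧
    (Abar d n A).ncard = n * d := by
  haveI : NeZero n := ⟨by omega⟩
  haveI : NeZero d := ⟨by omega⟩
  have cast_dvd : ∀ i j : ℤ, ((i : ZMod n) = (j : ZMod n)) ↔ (n : ℤ) ∣ j - i := by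
    intro i j
    rw [ZMod.intCast_eq_intCast_iff, Int.modEq_iff_dvd]
  constructor
  · intro τ
    have hbij : Set.BijOn (fun i : ℤ => (i : ZMod n))
        {i : ℤ | (τ, i) ∈ Abar d n A} Set.univ := by
      refine ⟨fun _ _ => trivial, ?_, ?_⟩
      · intro i hi j hj hij
        exact bar_unique d n m hn A hA τ i j hi hj ((cast_dvd i j).1 hij)
      · intro r _
        obtain ⟨z, hz⟩ := ZMod.intCast_surjective (n := n) r
        obtain ⟨i, hib, hid⟩ := exists_bar d n m hn A hA τ z
        exact ⟨i, hib, by rw [← hz, (cast_dvd z i).2 hid]⟩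
    rw [← Set.ncard_image_of_injOn hbij.injOn, hbij.image_eq, Set.ncard_univ,
      Nat.card_eq_fintype_card, ZMod.card]
  · have hbij : Set.BijOn (fun a : ZMod d × ℤ => (a.1, (a.2 : ZMod n)))
        (Abar d n A) Set.univ := by
      refine ⟨fun _ _ => trivial, ?_, ?_⟩
      · rintro ⟨τ1, i1⟩ h1 ⟨τ2, i2⟩ h2 heq
        simp only [Prod.ext_iff] at heq ⊢
        obtain ⟨ht, hi⟩ := heq
        subst ht
        exact ⟨rfl, bar_unique d n m hn A hA τ1 i1 i2 h1 h2 ((cast_dvd i1 i2).1 hi)⟩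
      · rintro ⟨τ, r⟩ _
        obtain ⟨z, hz⟩ := ZMod.intCast_surjective (n := n) r
        obtain ⟨i, hib, hid⟩ := exists_bar d n m hn A hA τ z
        refine ⟨(τ, i), hib, ?_⟩
        have h2 : ((i : ℤ) : ZMod n) = r := by
          rw [← hz]
          exact ((cast_dvd z i).2 hid).symm
        simp [h2]
    rw [← Set.ncard_image_of_injOn hbij.injOn, hbij.image_eq, Set.ncard_univ,
      Nat.card_eq_fintype_card, Fintype.card_prod, ZMod.card, ZMod.card, Nat.mul_comm]
end

section
/- Let A ⊆ O be a semi-module. Then the map r_A : Ā → Ā defined by r_A(b) = f(b) - n·φ_A(b) is a bijection of the finite set Ā onto itself. -/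
private lemma shift_nat_mem {d n m : ℕ} {A : Set (ZMod d × ℤ)} (hA : IsSemiModule d n m A)
    {a : ZMod d × ℤ} (ha : a ∈ A) (j : ℕ) : shiftO d a ((j : ℤ) * n) ∈ A := by
  induction j with
  | zero => simpa [shiftO] using ha
  | succ k ih =>
    have := hA.2.1 _ ih
    simp only [shiftO] at this ⊢
    convert this using 2
    push_cast
    ring

private lemma abar_key {d n m : ℕ} {A : Set (ZMod d × ℤ)} (hn : 1 ≤ n)
    (hA : IsSemiModule d n m A) : ∀ c₁ c₂ : ZMod d × ℤ, c₁ ∈ Abar d n A → c₂ ∈ Abar d n A →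
      c₁.1 = c₂.1 → (n : ℤ) ∣ (c₂.2 - c₁.2) → c₁.2 ≤ c₂.2 → c₁ = c₂ := by
  intro c₁ c₂ hc₁ hc₂ hf hd hle
  obtain ⟨k, hk⟩ := hd
  have hn' : (1 : ℤ) ≤ n := by exact_mod_cast hn
  have hk0 : 0 ≤ k := by nlinarith
  rcases eq_or_lt_of_le hk0 with h0 | hpos
  · refine Prod.ext hf ?_
    rw [← h0, mul_zero] at hk
    linarith
  · exfalso
    apply hc₂.2
    refine ⟨shiftO d c₁ (((k - 1).toNat : ℤ) * n), ?_, ?_⟩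
    · exact shift_nat_mem hA hc₁.1 (k - 1).toNat
    · simp only [shiftO]
      refine Prod.ext (by simpa using hf) ?_
      simp only
      have : ((k - 1).toNat : ℤ) = k - 1 := by omega
      rw [this]
      nlinarith

/-- two elements of Abar in the same column with n ∣ difference are equal -/
private lemma abar_unique {d n m : ℕ} {A : Set (ZMod d × ℤ)} (hn : 1 ≤ n)
    (hA : IsSemiModule d n m A) {b₁ b₂ : ZMod d × ℤ}
    (h₁ : b₁ ∈ Abar d n A) (h₂ : b₂ ∈ Abar d n A)
    (hfst : b₁.1 = b₂.1) (hdvd : (n : ℤ) ∣ (b₂.2 - b₁.2)) : b₁ = b₂ := by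
  rcases le_total b₁.2 b₂.2 with h | h
  · exact abar_key hn hA b₁ b₂ h₁ h₂ hfst hdvd h
  · exact (abar_key hn hA b₂ b₁ h₂ h₁ hfst.symm (dvd_sub_comm.mp hdvd) h).symm

/-- `r_A : Ā → Ā`, sending `b` to `f b - n • φ_A b`, is a bijection of `Ā` onto itself. -/
theorem stmt3 (d n m : ℕ) (hd : 1 ≤ d) (hn : 1 ≤ n)
    (A : Set (ZMod d × ℤ)) (hA : IsSemiModule d n m A)
    (φ : ZMod d × ℤ → ℤ)
    (hφ : ∀ a ∈ A, shiftO d (fO d m a) (-(φ a * (n : ℤ))) ∈ Abar d n A) :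
    Set.BijOn (fun b => shiftO d (fO d m b) (-(φ b * (n : ℤ))))
      (Abar d n A) (Abar d n A) := by
  haveI : NeZero d := ⟨by omega⟩
  haveI : NeZero n := ⟨by omega⟩
  have hfO1 : ∀ b : ZMod d × ℤ, (fO d m b).1 = b.1 - 1 := by
    intro b; unfold fO; split <;> rfl
  have hfO2 : ∀ b : ZMod d × ℤ, (fO d m b).2 = b.2 + (if b.1 = 1 then (m : ℤ) else 0) := by
    intro b; unfold fO; split <;> simp
  have hmaps : Set.MapsTo (fun b => shiftO d (fO d m b) (-(φ b * (n : ℤ))))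
      (Abar d n A) (Abar d n A) := fun b hb => hφ b hb.1
  have hinj : Set.InjOn (fun b => shiftO d (fO d m b) (-(φ b * (n : ℤ))))
      (Abar d n A) := by
    intro b₁ h₁ b₂ h₂ heq
    simp only [shiftO, Prod.mk.injEq] at heq
    obtain ⟨he1, he2⟩ := heq
    rw [hfO1, hfO1] at he1
    have hfst : b₁.1 = b₂.1 := by
      have := congrArg (· + 1) he1
      simpa using this
    rw [hfO2, hfO2, hfst] at he2
    have hdvd : (n : ℤ) ∣ (b₂.2 - b₁.2) := ⟨φ b₂ - φ b₁, by linarith⟩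
    exact abar_unique hn hA h₁ h₂ hfst hdvd
  have hfin : (Abar d n A).Finite := by
    have hi : Set.InjOn (fun a : ZMod d × ℤ => (a.1, (a.2 : ZMod n))) (Abar d n A) := by
      intro b₁ h₁ b₂ h₂ heq
      simp only [Prod.mk.injEq] at heq
      obtain ⟨hfst, hsnd⟩ := heq
      have hdvd : (n : ℤ) ∣ (b₂.2 - b₁.2) :=
        ((ZMod.intCast_eq_intCast_iff _ _ _).mp hsnd).dvd
      exact abar_unique hn hA h₁ h₂ hfst hdvd
    exact Set.Finite.of_finite_image (Set.toFinite _) hi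
  exact (Set.Finite.injOn_iff_bijOn_of_mapsTo hfin hmaps).mp hinj
end

section
/- Let A ⊆ O be a semi-module. Then the sum of φ_A(b) over all b ∈ Ā equals m. -/
/-- The sum of `φ_A b` over `b ∈ Ā` equals `m`. -/
theorem stmt5 (d n m : ℕ) (hd : 1 ≤ d) (hn : 1 ≤ n)
    (A : Set (ZMod d × ℤ)) (hA : IsSemiModule d n m A)
    (φ : ZMod d × ℤ → ℤ)
    (hφ : ∀ a ∈ A, shiftO d (fO d m a) (-(φ a * (n : ℤ))) ∈ Abar d n A) :
    ∑ᶠ b ∈ Abar d n A, φ b = (m : ℤ) := by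
  classical
  obtain ⟨hbdd, hshift, hf, hcover⟩ := hA
  haveI : NeZero d := ⟨by omega⟩
  haveI : NeZero n := ⟨by omega⟩
  -- characterization of Abar
  have hAbar : ∀ b : ZMod d × ℤ, b ∈ Abar d n A ↔ b ∈ A ∧ (b.1, b.2 - (n:ℤ)) ∉ A := by
    intro b
    constructor
    · rintro ⟨hbA, hb2⟩
      refine ⟨hbA, fun hc => hb2 ⟨(b.1, b.2 - n), hc, ?_⟩⟩
      simp [shiftO]
    · rintro ⟨hbA, hc⟩
      refine ⟨hbA, ?_⟩
      rintro ⟨a, haA, ha⟩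
      apply hc
      simp only [shiftO] at ha
      have h1 : a.1 = b.1 := by rw [← ha]
      have h2 : a.2 + n = b.2 := by rw [← ha]
      have : a = (b.1, b.2 - n) := by
        ext <;> simp [h1, ← h2]
      rwa [← this]
  have hsub : Abar d n A ⊆ A := fun b hb => hb.1
  -- shifting by k*n for k : ℕ
  have hshiftk : ∀ k : ℕ, ∀ a : ZMod d × ℤ, a ∈ A → (a.1, a.2 + (k:ℤ) * n) ∈ A := by
    intro k
    induction k with
    | zero => intro a ha; simpa using ha
    | succ k ih =>
      intro a ha
      have := hshift _ (ih a ha)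
      simp only [shiftO] at this
      have h : a.2 + ((k+1:ℕ):ℤ) * n = a.2 + (k:ℤ) * n + n := by push_cast; ring
      rw [h]
      exact this
  -- uniqueness within a fiber and residue class
  have haux : ∀ b ∈ A, ∀ b' ∈ Abar d n A, b'.1 = b.1 → ∀ k : ℤ, 0 < k → b'.2 = b.2 + k * n → False := by
    intro b hb b' hb' h1 k hk h2
    obtain ⟨hb'A, hb'n⟩ := (hAbar b').mp hb'
    apply hb'n
    obtain ⟨j, rfl⟩ : ∃ j : ℕ, k = (j : ℤ) + 1 := ⟨(k-1).toNat, by omega⟩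
    have := hshiftk j b hb
    have h3 : (b'.1, b'.2 - (n:ℤ)) = (b.1, b.2 + (j:ℤ) * n) := by
      ext
      · exact h1
      · simp only; rw [h2]; ring
    rw [h3]; exact this
  have huniq : ∀ b ∈ Abar d n A, ∀ b' ∈ Abar d n A, b.1 = b'.1 → (n:ℤ) ∣ (b'.2 - b.2) → b = b' := by
    intro b hb b' hb' h1 ⟨k, hk⟩
    rcases lt_trichotomy k 0 with h | h | h
    · exact (haux b' (hsub hb') b hb h1 (-k) (by omega) (by linear_combination -hk)).elim
    · ext
      · exact h1
      · rw [h, mul_zero] at hk; omega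
    · exact (haux b (hsub hb) b' hb' h1.symm k h (by linear_combination hk)).elim
  -- existence: each fiber and residue class contains an Abar element
  have hex : ∀ (τ : ZMod d) (r : ℤ), ∃ b ∈ Abar d n A, b.1 = τ ∧ (n:ℤ) ∣ (b.2 - r) := by
    intro τ r
    obtain ⟨a, haA, k, hx⟩ := hcover (τ, r)
    simp only [shiftO, Prod.mk.injEq] at hx
    obtain ⟨h1, h2⟩ := hx
    have hP : ∃ z : ℤ, ((τ, z) ∈ A ∧ (n:ℤ) ∣ (z - r)) := by
      refine ⟨a.2, ?_, ⟨-k, by linear_combination -h2⟩⟩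
      rw [h1]; exact haA
    obtain ⟨N, hN⟩ := hbdd τ
    obtain ⟨μ, ⟨hμA, hμd⟩, hμmin⟩ := Int.exists_least_of_bdd
      (P := fun z => (τ, z) ∈ A ∧ (n:ℤ) ∣ (z - r)) ⟨N, fun z hz => hN z hz.1⟩ hP
    refine ⟨(τ, μ), ?_, rfl, hμd⟩
    rw [hAbar]
    refine ⟨hμA, fun hc => ?_⟩
    have : μ ≤ μ - n := hμmin _ ⟨hc, by obtain ⟨c, hc'⟩ := hμd; exact ⟨c - 1, by linear_combination hc'⟩⟩
    omega
  -- encoding into the finite type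
  set e : ZMod d × ℤ → ZMod d × ZMod n := fun b => (b.1, (b.2 : ZMod n)) with he
  have hinj : Set.InjOn e (Abar d n A) := by
    intro b hb b' hb' h
    have h1 : b.1 = b'.1 := (Prod.ext_iff.mp h).1
    have h2 : (b.2 : ZMod n) = (b'.2 : ZMod n) := (Prod.ext_iff.mp h).2
    exact huniq b hb b' hb' h1 ((ZMod.intCast_eq_intCast_iff _ _ _).mp h2).dvd
  have hfin : (Abar d n A).Finite :=
    Set.Finite.of_finite_image (Set.toFinite _) hinj
  set F : Finset (ZMod d × ℤ) := hfin.toFinset with hF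
  have hmemF : ∀ b, b ∈ F ↔ b ∈ Abar d n A := fun b => hfin.mem_toFinset
  have hinjF : ∀ b ∈ F, ∀ b' ∈ F, e b = e b' → b = b' :=
    fun b hb b' hb' h => hinj ((hmemF b).mp hb) ((hmemF b').mp hb') h
  have himg : F.image e = Finset.univ := by
    apply Finset.eq_univ_of_forall
    rintro ⟨τ, s⟩
    obtain ⟨r, rfl⟩ := ZMod.intCast_surjective s
    obtain ⟨b, hb, hb1, hb2⟩ := hex τ r
    refine Finset.mem_image.mpr ⟨b, (hmemF b).mpr hb, ?_⟩
    simp only [he]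
    ext
    · exact hb1
    · exact (ZMod.intCast_eq_intCast_iff _ _ _).mpr
        (Int.ModEq.symm (Int.modEq_iff_dvd.mpr hb2))
  -- the map g
  set g : ZMod d × ℤ → ZMod d × ℤ := fun b => shiftO d (fO d m b) (-(φ b * n)) with hg
  have hgmem : ∀ b ∈ F, g b ∈ F := fun b hb => (hmemF _).mpr (hφ b (hsub ((hmemF b).mp hb)))
  have hg1 : ∀ b, (g b).1 = b.1 - 1 := by
    intro b; simp only [hg, shiftO, fO]; split <;> rfl
  have hg2 : ∀ b, (g b).2 = b.2 + (if b.1 = 1 then (m:ℤ) else 0) - φ b * n := by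
    intro b; simp only [hg, shiftO, fO]; split <;> (rename_i hc; simp [hc]) <;> ring
  have hginj : ∀ b ∈ F, ∀ b' ∈ F, g b = g b' → b = b' := by
    intro b hb b' hb' h
    have h1 : b.1 = b'.1 := by
      have h' := congrArg Prod.fst h
      rw [hg1, hg1] at h'
      exact sub_left_inj.mp h'
    have h2 : (g b).2 = (g b').2 := congrArg Prod.snd h
    rw [hg2, hg2, h1] at h2
    refine huniq b ((hmemF b).mp hb) b' ((hmemF b').mp hb') h1 ⟨φ b' - φ b, by linear_combination -h2⟩
  have himgg : F.image g = F := by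
    apply Finset.eq_of_subset_of_card_le
    · intro x hx
      obtain ⟨b, hb, rfl⟩ := Finset.mem_image.mp hx
      exact hgmem b hb
    · rw [Finset.card_image_of_injOn (fun b hb b' hb' => hginj b hb b' hb')]
  have hsum1 : ∑ b ∈ F, (g b).2 = ∑ b ∈ F, b.2 := by
    conv_rhs => rw [← himgg]
    rw [Finset.sum_image (fun b hb b' hb' => hginj b hb b' hb')]
  have hsum2 : ∑ b ∈ F, (if b.1 = 1 then (m:ℤ) else 0) = (n:ℤ) * m := by
    have h' : ∑ p ∈ F.image e, (if p.1 = 1 then (m:ℤ) else 0)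
        = ∑ b ∈ F, (if (e b).1 = 1 then (m:ℤ) else 0) := Finset.sum_image hinjF
    rw [himg] at h'
    have h'' : ∀ b : ZMod d × ℤ, (if (e b).1 = 1 then (m:ℤ) else 0) = (if b.1 = 1 then (m:ℤ) else 0) := by
      intro b; rfl
    rw [Finset.sum_congr rfl (fun b _ => h'' b)] at h'
    rw [← h', Fintype.sum_prod_type]
    have hone : ∀ τ : ZMod d, (∑ _ : ZMod n, if τ = 1 then (m:ℤ) else 0) = (if τ = 1 then (n:ℤ)*m else 0) := by
      intro τ
      split <;> simp [Finset.card_univ, ZMod.card, mul_comm]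
    rw [Finset.sum_congr rfl (fun τ _ => hone τ),
      Finset.sum_ite_eq' Finset.univ (1 : ZMod d) (fun _ => (n:ℤ)*m)]
    simp
  have expand : ∑ b ∈ F, (g b).2
      = ∑ b ∈ F, b.2 + (n:ℤ) * m - (∑ b ∈ F, φ b) * n := by
    rw [Finset.sum_congr rfl (fun b _ => hg2 b), Finset.sum_sub_distrib,
      Finset.sum_add_distrib, hsum2, Finset.sum_mul]
  have hkey : (∑ b ∈ F, φ b) * n = (n:ℤ) * m := by linarith [hsum1, expand]
  have hn0 : (n:ℤ) ≠ 0 := Int.natCast_ne_zero.mpr (by omega)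
  have hfinal : ∑ b ∈ F, φ b = m := by
    have := mul_right_cancel₀ hn0 (hkey.trans (mul_comm (n:ℤ) m))
    exact this
  rw [finsum_mem_eq_finite_toFinset_sum _ hfin]
  exact hfinal
end

section
/- Let h = gcd(m, n) and for k ∈ ℤ let O^k = {(τ, i) ∈ O : i ≡ k (mod h)}. Then f(O^k) ⊆ O^k, and for any semi-module A the bijection r_A preserves Ā^k = Ā ∩ O^k; moreover each Ā^k (1 ≤ k ≤ h) has exactly nd/h elements. -/
lemma mem_A_add {d n m : ℕ} {A : Set (ZMod d × ℤ)} (hA : IsSemiModule d n m A)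
    {τ : ZMod d} {i : ℤ} (hi : (τ, i) ∈ A) (t : ℕ) : (τ, i + t * n) ∈ A := by
  induction t with
  | zero => simpa using hi
  | succ s ih =>
      have := hA.2.1 _ ih
      simp only [shiftO] at this
      have heq : (i + (s : ℤ) * n) + (n : ℤ) = i + ((s : ℕ) + 1 : ℕ) * n := by push_cast; ring
      rwa [heq] at this

/-- Existence and uniqueness of the representative of each class mod `n` in `Ā`. -/
lemma abar_exists_unique {d n m : ℕ} (hn : 1 ≤ n) {A : Set (ZMod d × ℤ)}
    (hA : IsSemiModule d n m A) (τ : ZMod d) (r : ℤ) :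
    ∃ i : ℤ, (τ, i) ∈ Abar d n A ∧ (n : ℤ) ∣ (i - r) := by
  obtain ⟨a, ha, k, hk⟩ := hA.2.2.2 (τ, r)
  simp only [shiftO, Prod.ext_iff] at hk
  obtain ⟨N, hN⟩ := hA.1 τ
  set S : ℤ → Prop := fun i => (τ, i) ∈ A ∧ (n : ℤ) ∣ (i - r) with hS
  have hSa : S a.2 := by
    constructor
    · rw [hk.1]; exact ha
    · exact ⟨-k, by rw [hk.2]; ring⟩
  have hbdd : ∃ b : ℤ, ∀ z, S z → b ≤ z := ⟨N, fun z hz => hN z hz.1⟩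
  obtain ⟨i₀, ⟨hi₀A, hi₀dvd⟩, hmin⟩ := Int.exists_least_of_bdd hbdd ⟨a.2, hSa⟩
  refine ⟨i₀, ⟨hi₀A, ?_⟩, hi₀dvd⟩
  rintro ⟨b, hb, hbe⟩
  simp only [shiftO, Prod.ext_iff] at hbe
  have hb' : S (i₀ - n) := by
    constructor
    · have : b = (τ, i₀ - n) := by
        rcases b with ⟨bτ, bi⟩
        simp only [Prod.ext_iff]
        exact ⟨hbe.1, by omega⟩
      rw [← this]; exact hb
    · obtain ⟨c, hc⟩ := hi₀dvd
      exact ⟨c - 1, by rw [mul_sub, mul_one, ← hc]; ring⟩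
  have := hmin _ hb'
  omega

lemma abar_unique_s6 {d n m : ℕ} (hn : 1 ≤ n) {A : Set (ZMod d × ℤ)}
    (hA : IsSemiModule d n m A) {τ : ZMod d} {i i' : ℤ}
    (hi : (τ, i) ∈ Abar d n A) (hi' : (τ, i') ∈ Abar d n A)
    (hd : (n : ℤ) ∣ (i' - i)) : i = i' := by
  have hnpos : (0:ℤ) < n := by exact_mod_cast hn
  by_contra hne
  rcases lt_or_gt_of_ne hne with hlt | hlt
  · obtain ⟨t, ht⟩ := hd
    have h0 : 0 < (n : ℤ) * t := by linarith
    have htpos : 0 < t := by nlinarith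
    obtain ⟨s, hs⟩ : ∃ s : ℕ, t = (s : ℤ) + 1 := ⟨(t - 1).toNat, by omega⟩
    have hmem : (τ, i + s * n) ∈ A := mem_A_add hA hi.1 s
    have : (τ, i') ∈ ((fun a => shiftO d a (n : ℤ)) '' A) := by
      refine ⟨(τ, i + s * n), hmem, ?_⟩
      refine Prod.ext rfl ?_
      show i + (s : ℤ) * n + n = i'
      rw [hs] at ht; linarith
    exact hi'.2 this
  · obtain ⟨t, ht⟩ := hd
    have h0 : (n : ℤ) * t < 0 := by linarith
    have htneg : t < 0 := by nlinarith
    obtain ⟨s, hs⟩ : ∃ s : ℕ, t = -((s : ℤ) + 1) := ⟨(-t - 1).toNat, by omega⟩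
    have hmem : (τ, i' + s * n) ∈ A := mem_A_add hA hi'.1 s
    have : (τ, i) ∈ ((fun a => shiftO d a (n : ℤ)) '' A) := by
      refine ⟨(τ, i' + s * n), hmem, ?_⟩
      refine Prod.ext rfl ?_
      show i' + (s : ℤ) * n + n = i
      rw [hs] at ht; linarith
    exact hi.2 this

/-- `f` preserves each `O^k`; `r_A` preserves each `Ā^k`; and each `Ā^k`
(for `1 ≤ k ≤ h`) has exactly `nd/h` elements, where `h = gcd(m, n)`. -/
theorem stmt6 (d n m : ℕ) (hd : 1 ≤ d) (hn : 1 ≤ n)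
    (A : Set (ZMod d × ℤ)) (hA : IsSemiModule d n m A)
    (φ : ZMod d × ℤ → ℤ)
    (hφ : ∀ a ∈ A, shiftO d (fO d m a) (-(φ a * (n : ℤ))) ∈ Abar d n A) :
    (∀ k : ℤ, ∀ a ∈ Omod d (Nat.gcd m n) k, fO d m a ∈ Omod d (Nat.gcd m n) k) ∧
    (∀ k : ℤ, ∀ b ∈ Abar d n A ∩ Omod d (Nat.gcd m n) k,
      shiftO d (fO d m b) (-(φ b * (n : ℤ))) ∈ Abar d n A ∩ Omod d (Nat.gcd m n) k) ∧
    (∀ k : ℕ, 1 ≤ k → k ≤ Nat.gcd m n →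
      (Abar d n A ∩ Omod d (Nat.gcd m n) (k : ℤ)).ncard = n * d / Nat.gcd m n) := by
  set h := Nat.gcd m n with hh
  have hm : (h : ℤ) ∣ (m : ℤ) := Int.natCast_dvd_natCast.mpr (Nat.gcd_dvd_left m n)
  have hndvd : h ∣ n := Nat.gcd_dvd_right m n
  have hnZ : (h : ℤ) ∣ (n : ℤ) := Int.natCast_dvd_natCast.mpr hndvd
  have hhpos : 0 < h := Nat.gcd_pos_of_pos_right m hn
  -- part 1
  have part1 : ∀ k : ℤ, ∀ a ∈ Omod d h k, fO d m a ∈ Omod d h k := by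
    intro k a ha
    simp only [Omod, Set.mem_setOf_eq] at ha ⊢
    unfold fO
    split
    · simp only
      obtain ⟨c, hc⟩ := ha
      obtain ⟨e, he⟩ := hm
      exact ⟨c + e, by rw [mul_add, ← hc, ← he]; ring⟩
    · exact ha
  refine ⟨part1, ?_, ?_⟩
  · -- part 2
    intro k b hb
    refine ⟨hφ b hb.1.1, ?_⟩
    have h1 : fO d m b ∈ Omod d h k := part1 k b hb.2
    simp only [Omod, Set.mem_setOf_eq, shiftO] at h1 ⊢
    have heq : (fO d m b).2 + -(φ b * (n:ℤ)) - k = ((fO d m b).2 - k) - φ b * n := by ring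
    rw [heq]
    exact dvd_sub h1 (Dvd.dvd.mul_left hnZ _)
  · -- part 3 : cardinality
    intro k hk1 hk2
    set q := n / h with hq
    have hnq : n = h * q := (Nat.mul_div_cancel' hndvd).symm
    have hqpos : 0 < q := Nat.div_pos (Nat.le_of_dvd hn hndvd) hhpos
    haveI : NeZero d := ⟨by omega⟩
    haveI : NeZero q := ⟨by omega⟩
    set F : ZMod d × ℤ → ZMod d × ZMod q := fun a => (a.1, (((a.2 - k) / h : ℤ) : ZMod q)) with hF
    have hbij : Set.BijOn F (Abar d n A ∩ Omod d h (k : ℤ)) Set.univ := by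
      refine ⟨fun x _ => trivial, ?_, ?_⟩
      · -- injOn
        rintro ⟨τ, i⟩ hx ⟨τ', i'⟩ hy hxy
        simp only [hF, Prod.ext_iff] at hxy
        obtain ⟨hτ, hval⟩ := hxy
        subst hτ
        have hdiv : ((q : ℤ)) ∣ ((i' - k) / h - (i - k) / h) := by
          have := (ZMod.intCast_eq_intCast_iff _ _ _).mp hval
          exact Int.ModEq.dvd this
        have hdi : (h : ℤ) ∣ (i - k) := hx.2
        have hdi' : (h : ℤ) ∣ (i' - k) := hy.2
        have hni : (n : ℤ) ∣ (i' - i) := by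
          obtain ⟨c, hc⟩ := hdiv
          have e1 : (h : ℤ) * ((i - k) / h) = i - k := Int.mul_ediv_cancel' hdi
          have e2 : (h : ℤ) * ((i' - k) / h) = i' - k := Int.mul_ediv_cancel' hdi'
          refine ⟨c, ?_⟩
          have : (h : ℤ) * ((i' - k) / h) - (h : ℤ) * ((i - k) / h) = (h : ℤ) * ((q : ℤ) * c) := by
            rw [← mul_sub, hc]
          rw [e1, e2] at this
          have hn' : (n : ℤ) = (h : ℤ) * q := by exact_mod_cast hnq
          rw [hn', mul_assoc]
          linarith
        have := abar_unique_s6 hn hA hx.1 hy.1 hni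
        simp [this]
      · -- surjOn
        rintro ⟨τ, c⟩ -
        obtain ⟨j, hj⟩ := ZMod.intCast_surjective (n := q) c
        obtain ⟨i, hiA, hidvd⟩ := abar_exists_unique hn hA τ (k + h * j)
        refine ⟨(τ, i), ⟨hiA, ?_⟩, ?_⟩
        · -- in Omod
          obtain ⟨t, ht⟩ := hidvd
          refine ⟨j + q * t, ?_⟩
          have hn' : (n : ℤ) = (h : ℤ) * q := by exact_mod_cast hnq
          rw [hn'] at ht
          simp only
          linarith [ht]
        · simp only [hF]
          refine Prod.ext rfl ?_
          show (((i - (k:ℤ)) / h : ℤ) : ZMod q) = c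
          obtain ⟨t, ht⟩ := hidvd
          have hn' : (n : ℤ) = (h : ℤ) * q := by exact_mod_cast hnq
          have hik : i - k = (h : ℤ) * (j + q * t) := by rw [hn'] at ht; linarith
          have : (i - k) / h = j + q * t := by
            rw [hik]; exact Int.mul_ediv_cancel_left _ (by exact_mod_cast hhpos.ne')
          rw [this, ← hj]
          push_cast
          simp
    have himg : F '' (Abar d n A ∩ Omod d h (k : ℤ)) = Set.univ := hbij.image_eq
    have hcard : (Abar d n A ∩ Omod d h (k : ℤ)).ncard =
        (Set.univ : Set (ZMod d × ZMod q)).ncard := by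
      rw [← himg, Set.ncard_image_of_injOn hbij.injOn]
    rw [hcard, Set.ncard_univ, Nat.card_eq_fintype_card, Fintype.card_prod, ZMod.card, ZMod.card]
    have hmul : h * q * d = h * (q * d) := by ring
    rw [hnq, hmul, Nat.mul_div_cancel_left _ hhpos]
    exact Nat.mul_comm d q
end

section
/- Let m ≥ 1, h = gcd(m, n), and let A ⊆ O be a semi-module. Then for each 1 ≤ k ≤ h the restriction of r_A to Ā^k = Ā ∩ O^k is a cyclic permutation, i.e. for any b, b' ∈ Ā^k there exists l ≥ 0 with r_A^l(b) = b'. Equivalently, the permutation r_A of Ā has exactly h orbits, namely the sets Ā^k. -/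
section Aux
variable (d n m : ℕ)

lemma fO_fst (a : ZMod d × ℤ) : (fO d m a).1 = a.1 - 1 := by
  unfold fO; split <;> rfl

lemma fO_snd (a : ZMod d × ℤ) :
    (fO d m a).2 = if a.1 = 1 then a.2 + (m:ℤ) else a.2 := by
  unfold fO; split <;> simp_all

def sig7 (x : ZMod d × ZMod n) : ZMod d × ZMod n :=
  (x.1 - 1, if x.1 = 1 then x.2 + (m : ZMod n) else x.2)

def pi7 (a : ZMod d × ℤ) : ZMod d × ZMod n := (a.1, (a.2 : ZMod n))

lemma pi7_r (φ : ZMod d × ℤ → ℤ) (a : ZMod d × ℤ) :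
    pi7 d n (shiftO d (fO d m a) (-(φ a * (n:ℤ)))) = sig7 d n m (pi7 d n a) := by
  unfold pi7 shiftO sig7
  refine Prod.ext ?_ ?_
  · simp [fO_fst]
  · simp only [fO_snd]
    split_ifs <;> push_cast [ZMod.natCast_self] <;> ring

lemma count_one (hd : 0 < d) (c : ZMod d) :
    ((Finset.range d).filter (fun j : ℕ => (j : ZMod d) = c)).card = 1 := by
  haveI : NeZero d := ⟨hd.ne'⟩
  have h : (Finset.range d).filter (fun j : ℕ => (j:ZMod d) = c) = {c.val} := by
    ext j
    simp only [Finset.mem_filter, Finset.mem_range, Finset.mem_singleton]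
    constructor
    · rintro ⟨hj, rfl⟩
      exact (ZMod.val_cast_of_lt hj).symm
    · rintro rfl
      exact ⟨ZMod.val_lt c, by simp [ZMod.natCast_val, ZMod.cast_id]⟩
  rw [h]; rfl

lemma sig7_iter (t : ℕ) (x : ZMod d × ZMod n) : (sig7 d n m)^[t] x =
    (x.1 - t, x.2 + m * (((Finset.range t).filter (fun j : ℕ => x.1 - (j:ZMod d) = 1)).card : ZMod n)) := by
  induction t with
  | zero => simp
  | succ t ih =>
    rw [Function.iterate_succ_apply', ih]
    unfold sig7
    rw [Finset.range_add_one, Finset.filter_insert]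
    by_cases hc : x.1 - (t:ZMod d) = 1
    · simp only [if_pos hc]
      rw [Finset.card_insert_of_notMem (by simp)]
      refine Prod.ext ?_ ?_ <;> simp <;> push_cast <;> ring
    · simp only [if_neg hc]
      refine Prod.ext ?_ ?_ <;> simp [hc] <;> push_cast <;> ring

lemma sig7_iter_d (hd : 0 < d) (x : ZMod d × ZMod n) :
    (sig7 d n m)^[d] x = (x.1, x.2 + (m : ZMod n)) := by
  rw [sig7_iter]
  refine Prod.ext ?_ ?_
  · simp [ZMod.natCast_self]
  · have hcong : (Finset.range d).filter (fun j : ℕ => x.1 - (j:ZMod d) = 1)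
        = (Finset.range d).filter (fun j : ℕ => (j:ZMod d) = x.1 - 1) := by
      apply Finset.filter_congr
      intro j _
      constructor
      · intro h; rw [← h]; ring
      · intro h; rw [h]; ring
    simp only [hcong, count_one d hd (x.1 - 1)]
    simp

lemma sig7_iter_ds (hd : 0 < d) (s : ℕ) (x : ZMod d × ZMod n) :
    (sig7 d n m)^[d * s] x = (x.1, x.2 + (s : ZMod n) * m) := by
  induction s generalizing x with
  | zero => simp
  | succ s ih =>
    rw [Nat.mul_succ, Function.iterate_add_apply, sig7_iter_d d n m hd, ih]
    refine Prod.ext rfl ?_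
    show (x.1, x.2 + (m:ZMod n)).2 + (s:ZMod n) * m = x.2 + ((s+1 : ℕ) : ZMod n) * m
    push_cast
    ring

lemma addmul_mem (A : Set (ZMod d × ℤ)) (hA2 : ∀ a ∈ A, shiftO d a (n : ℤ) ∈ A) :
    ∀ (j : ℕ), ∀ x ∈ A, (x.1, x.2 + (n:ℤ) * j) ∈ A := by
  intro j
  induction j with
  | zero => intro x hx; simpa using hx
  | succ j ih =>
    intro x hx
    have h := hA2 _ (ih x hx)
    unfold shiftO at h
    have heq : ((x.1, x.2 + (n:ℤ) * j).1, (x.1, x.2 + (n:ℤ) * j).2 + (n:ℤ))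
        = (x.1, x.2 + (n:ℤ) * (j+1 : ℕ)) := by
      refine Prod.ext rfl ?_
      push_cast
      ring
    rwa [heq] at h

lemma abar_inj (A : Set (ZMod d × ℤ)) (hA2 : ∀ a ∈ A, shiftO d a (n : ℤ) ∈ A)
    (hn : 0 < n)
    (b b' : ZMod d × ℤ) (hb : b ∈ Abar d n A) (hb' : b' ∈ Abar d n A)
    (h1 : b.1 = b'.1) (h2 : (n:ℤ) ∣ b'.2 - b.2) : b = b' := by
  obtain ⟨t, ht⟩ := h2
  have key : ∀ (x y : ZMod d × ℤ), x ∈ A → y ∈ Abar d n A → x.1 = y.1 →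
      ∀ j : ℕ, y.2 = x.2 + (n:ℤ) * (j + 1) → False := by
    intro x y hx hy hxy j hj
    apply hy.2
    refine ⟨(x.1, x.2 + (n:ℤ) * j), addmul_mem d n A hA2 j x hx, ?_⟩
    show ((x.1, x.2 + (n:ℤ)*j).1, (x.1, x.2 + (n:ℤ)*j).2 + (n:ℤ)) = y
    refine Prod.ext hxy ?_
    show x.2 + (n:ℤ)*j + (n:ℤ) = y.2
    rw [hj]; ring
  rcases lt_trichotomy t 0 with h | h | h
  · exfalso
    refine key b' b hb'.1 hb h1.symm (-t - 1).toNat ?_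
    rw [Int.toNat_of_nonneg (by omega)]
    linear_combination -ht
  · refine Prod.ext h1 ?_
    subst h
    simp only [mul_zero] at ht
    omega
  · exfalso
    refine key b b' hb.1 hb' h1 (t - 1).toNat ?_
    rw [Int.toNat_of_nonneg (by omega)]
    linear_combination ht

end Aux

/-- For `m ≥ 1` and `h = gcd(m, n)`, the restriction of `r_A` to each `Ā^k`
(`1 ≤ k ≤ h`) is a cyclic permutation: any element can be carried to any other
by iterating `r_A`. -/
theorem stmt7 (d n m : ℕ) (hd : 1 ≤ d) (hn : 1 ≤ n) (hm : 1 ≤ m)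
    (A : Set (ZMod d × ℤ)) (hA : IsSemiModule d n m A)
    (φ : ZMod d × ℤ → ℤ)
    (hφ : ∀ a ∈ A, shiftO d (fO d m a) (-(φ a * (n : ℤ))) ∈ Abar d n A) :
    ∀ k : ℕ, 1 ≤ k → k ≤ Nat.gcd m n →
      ∀ b ∈ Abar d n A ∩ Omod d (Nat.gcd m n) (k : ℤ),
        ∀ b' ∈ Abar d n A ∩ Omod d (Nat.gcd m n) (k : ℤ),
          ∃ l : ℕ, (fun c => shiftO d (fO d m c) (-(φ c * (n : ℤ))))^[l] b = b' := by
  intro k hk1 hk2 b hb b' hb'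
  haveI : NeZero d := ⟨by omega⟩
  haveI : NeZero n := ⟨by omega⟩
  set r : ZMod d × ℤ → ZMod d × ℤ := fun c => shiftO d (fO d m c) (-(φ c * (n : ℤ))) with hrdef
  obtain ⟨hbA, hbO⟩ := hb
  obtain ⟨hb'A, hb'O⟩ := hb'
  have hbO' : (Nat.gcd m n : ℤ) ∣ b.2 - (k:ℤ) := hbO
  have hb'O' : (Nat.gcd m n : ℤ) ∣ b'.2 - (k:ℤ) := hb'O
  have hrbar : ∀ l : ℕ, r^[l] b ∈ Abar d n A := by
    intro l
    induction l with
    | zero => exact hbA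
    | succ l ih => rw [Function.iterate_succ_apply']; exact hφ _ ih.1
  have hpi : ∀ (l : ℕ) (x : ZMod d × ℤ), pi7 d n (r^[l] x) = (sig7 d n m)^[l] (pi7 d n x) := by
    intro l
    induction l with
    | zero => intro x; rfl
    | succ l ih =>
      intro x
      rw [Function.iterate_succ_apply', Function.iterate_succ_apply', ← ih]
      exact pi7_r d n m φ (r^[l] x)
  set t : ℕ := (b.1 - b'.1).val with htdef
  set c : ℕ := (((Finset.range t).filter (fun j : ℕ => b.1 - (j:ZMod d) = 1)).card) with hcdef
  have hdvd : (Nat.gcd m n : ℤ) ∣ b'.2 - b.2 - (m:ℤ) * c := by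
    have h1 : (Nat.gcd m n : ℤ) ∣ b'.2 - b.2 := by
      have h := dvd_sub hb'O' hbO'
      have heq : b'.2 - (k:ℤ) - (b.2 - (k:ℤ)) = b'.2 - b.2 := by ring
      rwa [heq] at h
    have h2 : (Nat.gcd m n : ℤ) ∣ (m:ℤ) := Int.natCast_dvd_natCast.mpr (Nat.gcd_dvd_left m n)
    exact dvd_sub h1 (h2.mul_right _)
  obtain ⟨e, he⟩ := hdvd
  have hg : (Nat.gcd m n : ℤ) = (m:ℤ) * Int.gcdA m n + (n:ℤ) * Int.gcdB m n := by
    have h := Int.gcd_eq_gcd_ab (m:ℤ) (n:ℤ)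
    rwa [Int.gcd_natCast_natCast] at h
  set u : ℤ := e * Int.gcdA m n with hudef
  have hu : (n:ℤ) ∣ b'.2 - b.2 - (m:ℤ) * c - (m:ℤ) * u := by
    refine ⟨e * Int.gcdB m n, ?_⟩
    rw [he, hg]; ring
  set s : ℕ := (u % (n:ℤ)).toNat with hsdef
  have hs : (s:ℤ) = u % (n:ℤ) :=
    Int.toNat_of_nonneg (Int.emod_nonneg u (by exact_mod_cast (by omega : (n:ℤ) ≠ 0)))
  have hns : (n:ℤ) ∣ b'.2 - b.2 - (m:ℤ) * c - (m:ℤ) * s := by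
    have h2 : (n:ℤ) ∣ (m:ℤ) * u - (m:ℤ) * s := by
      refine ⟨(m:ℤ) * (u / n), ?_⟩
      rw [hs, Int.emod_def]; ring
    have h3 := dvd_add hu h2
    have heq : b'.2 - b.2 - (m:ℤ)*c - (m:ℤ)*u + ((m:ℤ)*u - (m:ℤ)*s)
        = b'.2 - b.2 - (m:ℤ)*c - (m:ℤ)*s := by ring
    rwa [heq] at h3
  refine ⟨d * s + t, ?_⟩
  have hone : (sig7 d n m)^[t] (pi7 d n b) = (b'.1, (b.2 : ZMod n) + (m:ZMod n) * (c : ZMod n)) := by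
    rw [sig7_iter]
    refine Prod.ext ?_ rfl
    show b.1 - ((b.1 - b'.1).val : ZMod d) = b'.1
    rw [ZMod.natCast_val, ZMod.cast_id]; ring
  have hfinal : pi7 d n (r^[d * s + t] b) = pi7 d n b' := by
    rw [hpi, Function.iterate_add_apply, hone, sig7_iter_ds d n m (by omega) s]
    refine Prod.ext rfl ?_
    show (b.2:ZMod n) + (m:ZMod n) * (c:ZMod n) + (s:ZMod n) * (m:ZMod n) = (b'.2 : ZMod n)
    have h0 : ((b'.2 - b.2 - (m:ℤ) * c - (m:ℤ) * s : ℤ) : ZMod n) = 0 :=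
      (ZMod.intCast_zmod_eq_zero_iff_dvd _ n).mpr hns
    push_cast at h0
    linear_combination -h0
  have h5 := congrArg Prod.fst hfinal
  have h6 := congrArg Prod.snd hfinal
  simp only [pi7] at h5 h6
  have hdvd2 : (n:ℤ) ∣ b'.2 - (r^[d*s+t] b).2 := by
    have hmeq := (ZMod.intCast_eq_intCast_iff _ _ _).mp h6
    exact hmeq.dvd
  exact abar_inj d n A hA.2.1 (by omega) _ _ (hrbar _) hb'A h5 hdvd2
end

section
/- Let A ⊆ O be a semi-module and b ∈ O with b ∈ Ā and b + 1 ∈ Ā. If φ_A(b) < φ_A(b + 1), then r_A(b) and r_A(b + 1) lie in the same component {τ'} × ℤ of O and the second coordinate of r_A(b) exceeds that of r_A(b + 1) by at least n - 1; in particular r_A(b) > r_A(b+1) in the componentwise order on O. -/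
/-- If `b, b + 1 ∈ Ā` and `φ_A b < φ_A (b + 1)`, then `r_A b` and `r_A (b + 1)` lie in
the same component of `O`, the second coordinate of `r_A b` exceeds that of
`r_A (b + 1)` by at least `n - 1`, and in particular `r_A b > r_A (b + 1)`. -/
theorem stmt9 (d n m : ℕ) (hd : 1 ≤ d) (hn : 1 ≤ n)
    (A : Set (ZMod d × ℤ)) (hA : IsSemiModule d n m A)
    (φ : ZMod d × ℤ → ℤ)
    (hφ : ∀ a ∈ A, shiftO d (fO d m a) (-(φ a * (n : ℤ))) ∈ Abar d n A)
    (b : ZMod d × ℤ) (hb : b ∈ Abar d n A) (hb1 : shiftO d b 1 ∈ Abar d n A)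
    (hlt : φ b < φ (shiftO d b 1)) :
    (shiftO d (fO d m b) (-(φ b * (n : ℤ)))).1 =
        (shiftO d (fO d m (shiftO d b 1)) (-(φ (shiftO d b 1) * (n : ℤ)))).1 ∧
    (shiftO d (fO d m (shiftO d b 1)) (-(φ (shiftO d b 1) * (n : ℤ)))).2 + ((n : ℤ) - 1) ≤
        (shiftO d (fO d m b) (-(φ b * (n : ℤ)))).2 ∧
    (shiftO d (fO d m (shiftO d b 1)) (-(φ (shiftO d b 1) * (n : ℤ)))).2 <
        (shiftO d (fO d m b) (-(φ b * (n : ℤ)))).2 := by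
  rcases eq_or_lt_of_le hn with h1 | h2
  · exact absurd ⟨b, hb.1, by simp [shiftO, ← h1]⟩ hb1.2
  have hb1' : shiftO d b 1 = (b.1, b.2 + 1) := rfl
  have hfst : (fO d m (b.1, b.2 + 1)).1 = (fO d m b).1 := by
    by_cases hc : b.1 = 1 <;> simp [fO, hc]
  have hsnd : (fO d m (b.1, b.2 + 1)).2 = (fO d m b).2 + 1 := by
    by_cases hc : b.1 = 1 <;> simp [fO, hc] <;> ring
  have hxy : φ b + 1 ≤ φ (shiftO d b 1) := hlt
  rw [hb1'] at hxy ⊢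
  refine ⟨?_, ?_, ?_⟩
  · simp only [shiftO, hfst]
  · simp only [shiftO, hsnd]
    nlinarith [hxy, h2]
  · simp only [shiftO, hsnd]
    nlinarith [hxy, h2]
end

section
/- Let 𝕜 be an algebraically closed field containing 𝔽_q (q a prime power), and let s, r ≥ 1. For each 1 ≤ i ≤ r let δ_i ∈ 𝕜[X_1, …, X_{i-1}] be a polynomial. Then the system of equations X_i^{q^s} - X_i + δ_i(X_1, …, X_{i-1}) = 0 (1 ≤ i ≤ r) has exactly q^{sr} solutions in 𝕜^r. -/
/-! Since `q ^ s = 0` in `𝕜`, the polynomial `X ^ (q ^ s) - X + c` has derivative `-1`, so it is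
separable and, `𝕜` being algebraically closed, has exactly `q ^ s` roots. The `i`-th equation
involves only `X_1, …, X_i`, so the solutions are counted one coordinate at a time: whatever the
values of `X_1, …, X_{i-1}`, there are exactly `q ^ s` choices for `X_i`. -/

theorem Nat.card_sigma_of_forall_card_eq {α : Type*} {β : α → Type*} {n : ℕ}
    (h : ∀ a, Nat.card (β a) = n) : Nat.card (Σ a, β a) = Nat.card α * n := by
  rcases Nat.eq_zero_or_pos n with rfl | hn
  · rw [mul_zero]
    by_contra hne
    have := Nat.finite_of_card_ne_zero hne
    obtain ⟨a, b⟩ := (Nat.card_pos_iff.1 (Nat.pos_of_ne_zero hne)).1.some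
    have : Finite (β a) := Finite.of_injective _ sigma_mk_injective
    exact (Nat.card_pos_iff.2 ⟨⟨b⟩, this⟩).ne' (h a)
  · have e : ∀ a, β a ≃ Fin n := fun a =>
      (Nat.equivFinOfCardPos (by rw [h a]; exact hn.ne')).trans (finCongr (h a))
    rw [← Nat.card_fin n, ← Nat.card_prod]
    exact Nat.card_congr ((Equiv.sigmaCongrRight e).trans (Equiv.sigmaEquivProd _ _))

open Polynomial in
theorem ncard_setOf_pow_sub_self_add_eq_zero {K : Type*} [Field K] [IsAlgClosed K] {n : ℕ}
    (hn : (n : K) = 0) (h1 : 1 < n) (c : K) : {z : K | z ^ n - z + c = 0}.ncard = n := by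
  set P : K[X] := X ^ n - X + C c
  have hsep : P.Separable := ⟨0, -1, by simp [P, derivative_X_pow, hn]⟩
  have hdeg : P.natDegree = n := by
    unfold P
    rw [natDegree_add_C, natDegree_sub_eq_left_of_natDegree_lt] <;> simp [h1]
  have hP : P ≠ 0 := fun h => by simp [h] at hdeg; omega
  have hroots : {z : K | z ^ n - z + c = 0} = P.rootSet K := by
    ext z
    simp [mem_rootSet, hP, P]
  rw [hroots, ← Nat.card_coe_set_eq, Nat.card_eq_fintype_card,
    card_rootSet_eq_natDegree hsep (IsAlgClosed.splits _), hdeg]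

theorem MvPolynomial.eval_eq_eval_of_forall_vars {R σ : Type*} [CommSemiring R]
    {p : MvPolynomial σ R} {x y : σ → R} (h : ∀ i ∈ p.vars, x i = y i) :
    eval x p = eval y p :=
  eval₂Hom_congr' rfl (fun i hi _ => h i hi) rfl

theorem ncard_setOf_forall_mem_of_triangular {α : Type*} [Nonempty α] {r : ℕ}
    (F : Fin r → (Fin r → α) → Set α) (n : Fin r → ℕ)
    (hF : ∀ i x y, (∀ j < i, x j = y j) → F i x = F i y)
    (hcard : ∀ i x, (F i x).ncard = n i) :
    {x : Fin r → α | ∀ i, x i ∈ F i x}.ncard = ∏ i, n i := by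
  induction r with
  | zero => simp
  | succ r ih =>
    obtain ⟨a⟩ := ‹Nonempty α›
    have hsnoc : ∀ i (y : Fin r → α) z, F i (Fin.snoc y z) = F i (Fin.snoc y a) :=
      fun i y z => hF i _ _ fun j hj => by
        obtain ⟨j, rfl⟩ := Fin.exists_castSucc_eq.2 (hj.trans_le i.le_last).ne
        simp only [Fin.snoc_castSucc]
    set F' : Fin r → (Fin r → α) → Set α := fun i y => F i.castSucc (Fin.snoc y a)
    have hF' : ∀ i x y, (∀ j < i, x j = y j) → F' i x = F' i y := by
      intro i x y hxy
      refine hF _ _ _ fun j hj => ?_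
      obtain ⟨j, rfl⟩ := Fin.exists_castSucc_eq.2 (hj.trans (Fin.castSucc_lt_last i)).ne
      simpa only [Fin.snoc_castSucc] using hxy j (Fin.castSucc_lt_castSucc_iff.1 hj)
    have e : {x : Fin (r + 1) → α | ∀ i, x i ∈ F i x} ≃
        Σ y : {y : Fin r → α | ∀ i, y i ∈ F' i y}, F (Fin.last r) (Fin.snoc y.1 a) :=
      { toFun := fun x => ⟨⟨Fin.init x.1, fun i => by
            simpa [F', Fin.init, ← hsnoc _ _ (x.1 (Fin.last r)), Fin.snoc_init_self]
              using x.2 i.castSucc⟩,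
          ⟨x.1 (Fin.last r), by
            simpa [← hsnoc _ _ (x.1 (Fin.last r)), Fin.snoc_init_self]
              using x.2 (Fin.last r)⟩⟩
        invFun := fun yz => ⟨Fin.snoc yz.1.1 yz.2.1,
          Fin.lastCases (by simp [hsnoc, yz.2.2]) fun i => by simpa [hsnoc] using yz.1.2 i⟩
        left_inv := fun x => Subtype.ext (Fin.snoc_init_self x.1)
        right_inv := fun yz => Sigma.subtype_ext
          (Subtype.ext (Fin.init_snoc (α := fun _ => α) _ _))
          (Fin.snoc_last (α := fun _ => α) _ _) }
    rw [← Nat.card_coe_set_eq, Nat.card_congr e,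
      Nat.card_sigma_of_forall_card_eq fun y => (Nat.card_coe_set_eq _).trans (hcard _ _),
      Nat.card_coe_set_eq, ih F' _ hF' fun i y => hcard _ _, Fin.prod_univ_castSucc]

theorem stmt13_general (p e q s r : ℕ) (hp : p.Prime) (he : 1 ≤ e) (hq : q = p ^ e)
    (hs : 1 ≤ s)
    (𝕜 : Type*) [Field 𝕜] [IsAlgClosed 𝕜] [CharP 𝕜 p]
    (δ : Fin r → MvPolynomial (Fin r) 𝕜)
    (hδ : ∀ i : Fin r, ∀ j ∈ (δ i).vars, (j : ℕ) < (i : ℕ)) :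
    {x : Fin r → 𝕜 | ∀ i : Fin r,
      x i ^ (q ^ s) - x i + MvPolynomial.eval x (δ i) = 0}.ncard = q ^ (s * r) := by
  have hq_pow : 1 < q ^ s := Nat.one_lt_pow (by omega) (hq ▸ Nat.one_lt_pow (by omega) hp.one_lt)
  have hchar : ((q ^ s : ℕ) : 𝕜) = 0 := by
    rw [CharP.cast_eq_zero_iff 𝕜 p, hq, ← pow_mul]
    exact dvd_pow_self p (by positivity)
  refine (ncard_setOf_forall_mem_of_triangular
    (fun i x => {z | z ^ (q ^ s) - z + MvPolynomial.eval x (δ i) = 0}) (fun _ => q ^ s)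
    (fun i x y hxy => ?_) (fun i x => ncard_setOf_pow_sub_self_add_eq_zero hchar hq_pow _)).trans ?_
  · rw [MvPolynomial.eval_eq_eval_of_forall_vars fun j hj => hxy j (hδ i j hj)]
  · rw [Finset.prod_const, Finset.card_univ, Fintype.card_fin, ← pow_mul]

/-- A triangular system of Artin–Schreier equations
`X_i ^ (q^s) - X_i + δ_i(X_1, …, X_{i-1}) = 0` over an algebraically closed field
containing `𝔽_q` has exactly `q^(s r)` solutions. -/
theorem stmt13 (p e q s r : ℕ) (hp : p.Prime) (he : 1 ≤ e) (hq : q = p ^ e)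
    (hs : 1 ≤ s) (hr : 1 ≤ r)
    (𝕜 : Type*) [Field 𝕜] [IsAlgClosed 𝕜] [CharP 𝕜 p]
    (δ : Fin r → MvPolynomial (Fin r) 𝕜)
    (hδ : ∀ i : Fin r, ∀ j ∈ (δ i).vars, (j : ℕ) < (i : ℕ)) :
    {x : Fin r → 𝕜 | ∀ i : Fin r,
      x i ^ (q ^ s) - x i + MvPolynomial.eval x (δ i) = 0}.ncard = q ^ (s * r) :=
  stmt13_general p e q s r hp he hq hs 𝕜 δ hδ
end

section
/- Let m ≥ 1, h = gcd(m, n), and consider the map induced by f on the quotient set Q = O / ∼, where (τ, i) ∼ (τ, i + n). Then f descends to a permutation of the finite set Q (of cardinality nd), and this permutation has exactly h orbits, each of cardinality nd/h, namely the images of the sets O^k = {(τ, i) : i ≡ k (mod h)} for 1 ≤ k ≤ h. -/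
/-- The map on the quotient `Q = (ℤ/dℤ) × (ℤ/nℤ)` induced by `f`. -/
def fQ (d n m : ℕ) (a : ZMod d × ZMod n) : ZMod d × ZMod n :=
  if a.1 = 1 then (a.1 - 1, a.2 + (m : ZMod n)) else (a.1 - 1, a.2)

/-- The image in `Q` of `O^k = {(τ, i) : i ≡ k (mod h)}`, `h = gcd(m, n)`. -/
def Qmod (d n m : ℕ) (k : ℕ) : Set (ZMod d × ZMod n) :=
  {a | ZMod.castHom (Nat.gcd_dvd_right m n) (ZMod (Nat.gcd m n)) a.2
        = (k : ZMod (Nat.gcd m n))}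

/- ### Auxiliary lemmas -/

lemma iter_general (d n m : ℕ) : ∀ (l : ℕ) (τ : ZMod d) (i : ZMod n),
    ∃ c : ℕ, (fQ d n m)^[l] (τ, i) = (τ - l, i + m * c) := by
  intro l
  induction l with
  | zero => intro τ i; exact ⟨0, by simp⟩
  | succ l ih =>
    intro τ i
    rw [Function.iterate_succ_apply]
    by_cases hτ : τ = 1
    · obtain ⟨c, hc⟩ := ih (τ - 1) (i + m)
      refine ⟨c + 1, ?_⟩
      simp only [fQ, if_pos hτ]
      rw [hc, Prod.ext_iff]
      constructor <;> simp <;> push_cast <;> ring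
    · obtain ⟨c, hc⟩ := ih (τ - 1) i
      refine ⟨c, ?_⟩
      simp only [fQ, if_neg hτ]
      rw [hc, Prod.ext_iff]
      constructor <;> simp <;> push_cast <;> ring

lemma iter_from_zero (d n m : ℕ) : ∀ (s : ℕ), s < d → ∀ i : ZMod n,
    (fQ d n m)^[s] ((0 : ZMod d), i) = (-(s : ZMod d), i) := by
  intro s
  induction s with
  | zero => intro _ i; simp
  | succ s ih =>
    intro hs i
    rw [Function.iterate_succ_apply', ih (by omega) i]
    have h1 : ¬ (-(s : ZMod d) = 1) := by
      intro h
      have h2 : ((s + 1 : ℕ) : ZMod d) = 0 := by push_cast; rw [← h]; ring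
      rw [ZMod.natCast_eq_zero_iff] at h2
      have := Nat.le_of_dvd (by omega) h2
      omega
    simp only [fQ, if_neg h1]
    rw [Prod.ext_iff]
    constructor <;> simp <;> push_cast <;> ring

lemma iter_to_one (d n m : ℕ) : ∀ (r : ℕ), r < d → ∀ i : ZMod n,
    (fQ d n m)^[r] ((r : ZMod d) + 1, i) = (1, i) := by
  intro r
  induction r with
  | zero => intro _ i; simp
  | succ r ih =>
    intro hr i
    have h1 : ¬ ((r + 1 : ℕ) : ZMod d) + 1 = 1 := by
      intro h
      have h2 : ((r + 1 : ℕ) : ZMod d) = 0 := by linear_combination h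
      rw [ZMod.natCast_eq_zero_iff] at h2
      have := Nat.le_of_dvd (by omega) h2
      omega
    rw [Function.iterate_succ_apply]
    have : fQ d n m ((((r : ℕ) + 1 : ℕ) : ZMod d) + 1, i) = ((r : ZMod d) + 1, i) := by
      simp only [fQ, if_neg h1]
      rw [Prod.ext_iff]
      constructor <;> simp <;> push_cast <;> ring
    rw [this, ih (by omega) i]

lemma iter_period (d n m : ℕ) (hd : 1 ≤ d) (τ : ZMod d) (i : ZMod n) :
    (fQ d n m)^[d] (τ, i) = (τ, i + m) := by
  haveI : NeZero d := ⟨by omega⟩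
  set r := (τ - 1).val with hrdef
  have hr : r < d := ZMod.val_lt _
  have hτ : ((r : ZMod d)) + 1 = τ := by
    rw [hrdef, ZMod.natCast_val, ZMod.cast_id]; ring
  have hstep : (fQ d n m)^[d] (τ, i) = (fQ d n m)^[(d - 1 - r) + (1 + r)] (τ, i) := by
    rw [show (d - 1 - r) + (1 + r) = d from by omega]
  rw [hstep, Function.iterate_add_apply, Function.iterate_add_apply,
    ← hτ, iter_to_one d n m r hr i]
  have h2 : (fQ d n m)^[1] ((1 : ZMod d), i) = (0, i + m) := by
    simp [fQ]
  rw [h2, iter_from_zero d n m (d - 1 - r) (by omega) (i + m)]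
  congr 1
  have : ((d - 1 - r : ℕ) : ZMod d) = -((r : ZMod d) + 1) := by
    have hc : ((d - 1 - r : ℕ) : ZMod d) + ((1 + r : ℕ) : ZMod d) = ((d : ℕ) : ZMod d) := by
      rw [← Nat.cast_add]; congr 1; omega
    rw [ZMod.natCast_self] at hc
    push_cast at hc
    linear_combination hc
  rw [this, neg_neg, hτ]

lemma iter_period_mul (d n m : ℕ) (hd : 1 ≤ d) : ∀ (t : ℕ) (τ : ZMod d) (i : ZMod n),
    (fQ d n m)^[t * d] (τ, i) = (τ, i + m * t) := by
  intro t
  induction t with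
  | zero => intro τ i; simp
  | succ t ih =>
    intro τ i
    have h : (t + 1) * d = t * d + d := by ring
    rw [h, Function.iterate_add_apply, iter_period d n m hd, ih]
    rw [Prod.ext_iff]
    constructor <;> simp <;> push_cast <;> ring

lemma exists_mul_eq (n m : ℕ) (hn : 1 ≤ n) (x : ZMod n)
    (hx : Nat.gcd m n ∣ x.val) : ∃ t : ℕ, (m : ZMod n) * t = x := by
  haveI : NeZero n := ⟨by omega⟩
  obtain ⟨w, hw⟩ := hx
  set u : ℤ := Nat.gcdA m n * w with hu
  refine ⟨(u % n).toNat, ?_⟩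
  have hnn : (0 : ℤ) ≤ u % n := Int.emod_nonneg u (by exact_mod_cast by omega)
  have h1 : (((u % n).toNat : ℕ) : ZMod n) = ((u % n : ℤ) : ZMod n) := by
    rw [← Int.cast_natCast, Int.toNat_of_nonneg hnn]
  rw [h1, ZMod.intCast_mod]
  have hbez : ((Nat.gcd m n : ℤ)) = m * Nat.gcdA m n + n * Nat.gcdB m n :=
    Nat.gcd_eq_gcd_ab m n
  have hxval : (x.val : ℤ) = m * u + n * (Nat.gcdB m n * w) := by
    rw [hu]
    have h2 : (x.val : ℤ) = (Nat.gcd m n : ℤ) * w := by exact_mod_cast hw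
    rw [h2, hbez]; ring
  have hx2 : ((x.val : ℤ) : ZMod n) = x := by
    rw [Int.cast_natCast, ZMod.natCast_val, ZMod.cast_id]
  calc (m : ZMod n) * ((u : ℤ) : ZMod n) = ((m * u + n * (Nat.gcdB m n * w) : ℤ) : ZMod n) := by
        push_cast; simp [ZMod.natCast_self]
    _ = x := by rw [← hxval, hx2]

lemma fiber_card (m n : ℕ) (hm : 1 ≤ m) (hn : 1 ≤ n) (c : ZMod (Nat.gcd m n)) :
    {x : ZMod n | ZMod.castHom (Nat.gcd_dvd_right m n) (ZMod (Nat.gcd m n)) x = c}.ncard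
      = n / Nat.gcd m n := by
  haveI : NeZero n := ⟨by omega⟩
  haveI : NeZero (Nat.gcd m n) := ⟨Nat.gcd_ne_zero_left (by omega)⟩
  let h := Nat.gcd m n
  let φ := ZMod.castHom (Nat.gcd_dvd_right m n) (ZMod h)
  set F : ZMod h → Finset (ZMod n) := fun c' => Finset.univ.filter (fun x => φ x = c') with hF
  have hcards : ∀ c₁ c₂ : ZMod h, (F c₁).card = (F c₂).card := by
    intro c₁ c₂
    set e : ZMod n := (((c₂ - c₁ : ZMod h)).val : ZMod n) with he
    have hφe : φ e = c₂ - c₁ := by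
      rw [he]; rw [map_natCast, ZMod.natCast_val, ZMod.cast_id]
    apply Finset.card_bij' (fun x _ => x + e) (fun y _ => y - e)
    · intro x hx
      simp only [hF, Finset.mem_filter, Finset.mem_univ, true_and] at hx ⊢
      rw [map_add, hx, hφe]; ring
    · intro y hy
      simp only [hF, Finset.mem_filter, Finset.mem_univ, true_and] at hy ⊢
      rw [map_sub, hy, hφe]; ring
    · intro x _; ring
    · intro y _; ring
  have hsum : (Finset.univ : Finset (ZMod n)).card
      = ∑ c' : ZMod h, (F c').card := by
    apply Finset.card_eq_sum_card_fiberwise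
    intro x _; exact Finset.mem_univ _
  have hsum2 : ∑ c' : ZMod h, (F c').card = h * (F c).card := by
    rw [Finset.sum_congr rfl (fun c' _ => hcards c' c)]
    simp [Finset.card_univ, ZMod.card, mul_comm]
  have hn2 : n = h * (F c).card := by
    rw [← hsum2, ← hsum, Finset.card_univ, ZMod.card]
  have hset : {x : ZMod n | φ x = c} = ↑(F c) := by
    ext x; simp [hF]
  rw [show {x : ZMod n | ZMod.castHom (Nat.gcd_dvd_right m n) (ZMod (Nat.gcd m n)) x = c} = ↑(F c) from hset,
    Set.ncard_coe_finset]
  exact (Nat.div_eq_of_eq_mul_left (Nat.pos_of_ne_zero (Nat.gcd_ne_zero_left (by omega)))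
    (hn2.trans (mul_comm _ _))).symm

/-- `f` descends to a permutation of the finite set `Q` of cardinality `nd`, with
exactly `h` orbits, namely the images of the `O^k` (`1 ≤ k ≤ h`), each of
cardinality `nd/h`. -/
theorem stmt16 (d n m : ℕ) (hd : 1 ≤ d) (hn : 1 ≤ n) (hm : 1 ≤ m) :
    (∀ a : ZMod d × ℤ,
      fQ d n m (a.1, (a.2 : ZMod n)) = ((fO d m a).1, ((fO d m a).2 : ZMod n))) ∧
    Function.Bijective (fQ d n m) ∧
    Nat.card (ZMod d × ZMod n) = n * d ∧
    ∀ k : ℕ, 1 ≤ k → k ≤ Nat.gcd m n →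
      (∀ a ∈ Qmod d n m k, fQ d n m a ∈ Qmod d n m k) ∧
      (Qmod d n m k).ncard = n * d / Nat.gcd m n ∧
      ∀ a ∈ Qmod d n m k, ∀ b ∈ Qmod d n m k, ∃ l : ℕ, (fQ d n m)^[l] a = b := by
  haveI : NeZero d := ⟨by omega⟩
  haveI : NeZero n := ⟨by omega⟩
  haveI : NeZero (Nat.gcd m n) := ⟨Nat.gcd_ne_zero_left (by omega)⟩
  set φ := ZMod.castHom (Nat.gcd_dvd_right m n) (ZMod (Nat.gcd m n)) with hφ
  have hmzero : ((m : ℕ) : ZMod (Nat.gcd m n)) = 0 :=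
    (ZMod.natCast_eq_zero_iff m (Nat.gcd m n)).mpr (Nat.gcd_dvd_left m n)
  refine ⟨?_, ?_, ?_, ?_⟩
  · -- descends
    intro a
    simp only [fQ, fO]
    by_cases h : a.1 = 1
    · simp only [if_pos h]; rw [Prod.ext_iff]; constructor <;> simp <;> push_cast <;> ring
    · simp only [if_neg h]
  · -- bijective
    rw [← Finite.injective_iff_bijective]
    intro a b hab
    have h1 : a.1 = b.1 := by
      have h := congrArg Prod.fst hab
      simp only [fQ] at h
      split_ifs at h <;> simpa using h
    have h2 : a.2 = b.2 := by
      have h := congrArg Prod.snd hab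
      simp only [fQ, h1] at h
      split_ifs at h with hcond
      · simpa using h
      · exact h
    exact Prod.ext h1 h2
  · -- cardinality
    rw [Nat.card_prod, Nat.card_zmod, Nat.card_zmod, mul_comm]
  · -- orbits
    intro k _ _
    refine ⟨?_, ?_, ?_⟩
    · -- invariance
      intro a ha
      simp only [Qmod, Set.mem_setOf_eq] at ha ⊢
      by_cases h : a.1 = 1
      · simp only [fQ, if_pos h, map_add, map_natCast, ha, hmzero, add_zero]
      · simpa only [fQ, if_neg h] using ha
    · -- cardinality of Qmod
      have hQ : Qmod d n m k =
          (Set.univ : Set (ZMod d)) ×ˢ {x : ZMod n | φ x = (k : ZMod (Nat.gcd m n))} := by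
        ext ⟨x, y⟩; simp [Qmod, hφ]
      rw [hQ, ← Nat.card_coe_set_eq]
      have e : ((Set.univ : Set (ZMod d)) ×ˢ {x : ZMod n | φ x = (k : ZMod (Nat.gcd m n))} :
          Set (ZMod d × ZMod n)) ≃
          ZMod d × ↥({x : ZMod n | φ x = (k : ZMod (Nat.gcd m n))}) :=
        { toFun := fun a => (a.1.1, ⟨a.1.2, a.2.2⟩)
          invFun := fun p => ⟨(p.1, p.2.1), ⟨Set.mem_univ _, p.2.2⟩⟩
          left_inv := fun a => rfl
          right_inv := fun p => rfl }
      rw [Nat.card_congr e, Nat.card_prod, Nat.card_zmod, Nat.card_coe_set_eq]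
      rw [show ({x : ZMod n | φ x = (k : ZMod (Nat.gcd m n))}).ncard = n / Nat.gcd m n from
        fiber_card m n hm hn k]
      rw [mul_comm n d, Nat.mul_div_assoc d (Nat.gcd_dvd_right m n)]
    · -- connectivity
      intro a ha b hb
      simp only [Qmod, Set.mem_setOf_eq] at ha hb
      obtain ⟨c, hc⟩ := iter_general d n m (a.1 - b.1).val a.1 a.2
      have hfirst : a.1 - ((a.1 - b.1).val : ZMod d) = b.1 := by
        rw [ZMod.natCast_val, ZMod.cast_id]; ring
      rw [hfirst] at hc
      set x : ZMod n := b.2 - (a.2 + m * c) with hx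
      have hφx : φ x = 0 := by
        rw [hx, map_sub, map_add, map_mul, map_natCast, map_natCast, hb, ha, hmzero]
        ring
      have hdvd : Nat.gcd m n ∣ x.val := by
        have : ((x.val : ℕ) : ZMod (Nat.gcd m n)) = 0 := by
          rw [← hφx, hφ, ZMod.castHom_apply, ZMod.natCast_val]
        rwa [ZMod.natCast_eq_zero_iff] at this
      obtain ⟨t, ht⟩ := exists_mul_eq n m hn x hdvd
      refine ⟨t * d + (a.1 - b.1).val, ?_⟩
      rw [Function.iterate_add_apply, show a = (a.1, a.2) from rfl, hc,
        iter_period_mul d n m hd t b.1 (a.2 + m * c)]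
      have : a.2 + m * c + m * t = b.2 := by rw [ht, hx]; ring
      rw [this]
end

section
/- Let m ≥ 1, h = gcd(m, n), m' = m/h, and let A ⊆ O be a semi-module. Then for each 1 ≤ k ≤ h, the sum of φ_A(b) over all b ∈ Ā^k = Ā ∩ O^k equals m'. -/
/-! In each column `{τ} × ℤ`, `Ā` has exactly one element in every residue class mod `n` (the least
element of `A` in that class), so `Ā^k` is finite with `n/h` elements per column. Since `h`
divides `m` and `n`, the map `b ↦ f(b) - n·φ(b)` permutes `Ā^k`; comparing the sums of the second
coordinates before and after this permutation gives `n · Σ φ = m · #{b ∈ Ā^k | τ(b) = 1} = m · n/h`.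
-/

theorem mem_Omod_iff {d h : ℕ} {k : ℤ} {a : ZMod d × ℤ} : a ∈ Omod d h k ↔ a.2 ≡ k [ZMOD h] := by
  rw [Int.modEq_comm, Int.modEq_iff_dvd]
  rfl

namespace IsSemiModule

variable {d n m : ℕ} {A : Set (ZMod d × ℤ)}

theorem add_nat_mul_mem (hA : IsSemiModule d n m A) {τ : ZMod d} {i : ℤ} (hi : (τ, i) ∈ A)
    (t : ℕ) : (τ, i + t * n) ∈ A := by
  induction t with
  | zero => simpa using hi
  | succ t ih => simpa [shiftO, add_mul, add_assoc] using hA.2.1 _ ih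

theorem eq_of_mem_Abar_of_modEq (hA : IsSemiModule d n m A) {τ : ZMod d} {i j : ℤ}
    (hi : (τ, i) ∈ Abar d n A) (hj : (τ, j) ∈ Abar d n A) (hij : i ≡ j [ZMOD n]) : i = j := by
  wlog hlt : i < j generalizing i j
  · rcases (not_lt.1 hlt).eq_or_lt with h | h
    · exact h.symm
    · exact (this hj hi hij.symm h).symm
  obtain ⟨c, hc⟩ := Int.modEq_iff_dvd.1 hij
  have hc_pos : 0 < c := by
    by_contra! hc'
    nlinarith [(Int.natCast_nonneg n)]
  refine (hj.2 ⟨(τ, i + (c - 1).toNat * n), hA.add_nat_mul_mem hi.1 _, ?_⟩).elim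
  simp only [shiftO, Prod.mk.injEq, true_and]
  rw [Int.toNat_of_nonneg (by omega)]
  linear_combination -hc

theorem exists_mem_Abar_modEq (hA : IsSemiModule d n m A) (hn : 0 < n) (τ : ZMod d) (r : ℤ) :
    ∃ i, (τ, i) ∈ Abar d n A ∧ i ≡ r [ZMOD n] := by
  obtain ⟨N, hN⟩ := hA.1 τ
  have hne : ∃ i, (τ, i) ∈ A ∧ i ≡ r [ZMOD n] := by
    obtain ⟨⟨σ, a⟩, ha, c, hc⟩ := hA.2.2.2 (τ, r)
    obtain ⟨rfl, rfl⟩ : τ = σ ∧ r = a + c * n := by simpa [shiftO] using hc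
    exact ⟨a, ha, Int.modEq_iff_dvd.2 ⟨c, by ring⟩⟩
  obtain ⟨i, ⟨hiA, hir⟩, hmin⟩ :=
    Int.exists_least_of_bdd ⟨N, fun i hi => hN i hi.1⟩ hne
  refine ⟨i, ⟨hiA, ?_⟩, hir⟩
  -- `i - n` would be a smaller element of `A` in the same class
  rintro ⟨⟨σ, a⟩, ha, hai⟩
  obtain ⟨rfl, rfl⟩ : σ = τ ∧ a + n = i := by simpa [shiftO] using hai
  have := hmin a ⟨ha, (Int.modEq_iff_dvd.2 ⟨1, by ring⟩).trans hir⟩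
  omega

theorem ncard_Abar_inter_Omod_fst_eq (hA : IsSemiModule d n m A) (hn : 0 < n) {h : ℕ}
    (hh : h ∣ n) (k : ℤ) (τ : ZMod d) : {b ∈ Abar d n A ∩ Omod d h k | b.1 = τ}.ncard = n / h := by
  obtain ⟨q, hq⟩ := hh
  have hh0 : h ≠ 0 := by rintro rfl; simp [hq] at hn
  choose rep hrep_mem hrep_mod using hA.exists_mem_Abar_modEq hn τ
  rw [show (n : ℤ) = h * q by exact_mod_cast hq] at hrep_mod
  set F : ℤ → ZMod d × ℤ := fun j => (τ, rep (k + j * h))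
  have hinj : Set.InjOn F (Set.Ico 0 q) := by
    rintro j ⟨hj0, hjq⟩ j' ⟨hj0', hjq'⟩ hjj'
    have hrep : rep (k + j * h) = rep (k + j' * h) := congrArg Prod.snd hjj'
    have : j * h ≡ j' * h [ZMOD q * h] := by
      rw [mul_comm (q : ℤ)]
      exact ((hrep_mod _).symm.trans (hrep ▸ hrep_mod _)).add_left_cancel' k
    have := (this.mul_right_cancel' (by exact_mod_cast hh0)).eq
    rwa [Int.emod_eq_of_lt hj0 hjq, Int.emod_eq_of_lt hj0' hjq'] at this
  have himage : F '' Set.Ico 0 q = {b ∈ Abar d n A ∩ Omod d h k | b.1 = τ} := by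
    ext ⟨σ, i⟩
    simp only [Set.mem_image, Set.mem_Ico, Set.mem_ofPred_eq, Set.mem_inter_iff, mem_Omod_iff, F]
    constructor
    · rintro ⟨j, -, hj⟩
      obtain ⟨rfl, rfl⟩ := Prod.ext_iff.1 hj
      refine ⟨⟨hrep_mem _, ?_⟩, rfl⟩
      calc rep (k + j * h) ≡ k + j * h [ZMOD h] := (hrep_mod _).of_mul_right _
        _ ≡ k + 0 [ZMOD h] := Int.ModEq.add_left _ (Int.modEq_zero_iff_dvd.2 (dvd_mul_left _ _))
        _ = k := add_zero k
    · rintro ⟨⟨hi, hik⟩, rfl⟩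
      obtain ⟨t, ht⟩ := (Int.modEq_iff_dvd.1 hik.symm)
      have hq0 : (0 : ℤ) < q := by
        rcases Nat.eq_zero_or_pos q with rfl | hq
        · simp [hq] at hn
        · exact_mod_cast hq
      refine ⟨t % q, ⟨Int.emod_nonneg _ hq0.ne', Int.emod_lt_of_pos _ hq0⟩, ?_⟩
      refine Prod.ext rfl (hA.eq_of_mem_Abar_of_modEq (hrep_mem _) hi ?_)
      rw [show (n : ℤ) = h * q by exact_mod_cast hq]
      calc rep (k + t % q * h) ≡ k + t % q * h [ZMOD h * q] := hrep_mod _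
        _ ≡ k + t * h [ZMOD h * q] := by
          rw [mul_comm (h : ℤ)]
          exact ((Int.mod_modEq t q).mul_right' (c := h)).add_left k
        _ = i := by linear_combination -ht
  rw [← himage, hinj.ncard_image, ← Finset.coe_Ico, Set.ncard_coe_finset, Int.card_Ico]
  simp [hq, Nat.pos_of_ne_zero hh0]

theorem finite_Abar_inter_Omod [NeZero d] (hA : IsSemiModule d n m A) (hn : 0 < n) {h : ℕ}
    (hh : h ∣ n) (k : ℤ) : (Abar d n A ∩ Omod d h k).Finite := by
  have hfiber (τ : ZMod d) : {b ∈ Abar d n A ∩ Omod d h k | b.1 = τ}.Finite := by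
    apply Set.finite_of_ncard_pos
    rw [hA.ncard_Abar_inter_Omod_fst_eq hn hh]
    exact Nat.div_pos (Nat.le_of_dvd hn hh) (Nat.pos_of_dvd_of_pos hh hn)
  exact (Set.finite_iUnion hfiber).subset fun b hb => Set.mem_iUnion.2 ⟨b.1, hb, rfl⟩

end IsSemiModule

def reducedF (d n m : ℕ) (φ : ZMod d × ℤ → ℤ) (b : ZMod d × ℤ) : ZMod d × ℤ :=
  shiftO d (fO d m b) (-(φ b * n))

section reducedF

variable {d n m : ℕ} {φ : ZMod d × ℤ → ℤ}

theorem reducedF_fst (b : ZMod d × ℤ) : (reducedF d n m φ b).1 = b.1 - 1 := by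
  unfold reducedF shiftO fO
  split_ifs <;> rfl

theorem reducedF_snd (b : ZMod d × ℤ) :
    (reducedF d n m φ b).2 = b.2 + (if b.1 = 1 then (m : ℤ) else 0) - φ b * n := by
  unfold reducedF shiftO fO
  split_ifs <;> simp [sub_eq_add_neg]

theorem IsSemiModule.injOn_reducedF {A : Set (ZMod d × ℤ)} (hA : IsSemiModule d n m A) :
    Set.InjOn (reducedF d n m φ) (Abar d n A) := by
  rintro ⟨σ, i⟩ hb ⟨σ', i'⟩ hb' he
  have hσ : σ = σ' := by simpa [reducedF_fst] using congrArg Prod.fst he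
  subst hσ
  have hi : i ≡ i' [ZMOD n] := by
    have := congrArg Prod.snd he
    simp only [reducedF_snd] at this
    exact Int.modEq_iff_dvd.2 ⟨φ (σ, i') - φ (σ, i), by linear_combination -this⟩
  rw [hA.eq_of_mem_Abar_of_modEq hb hb' hi]

theorem mapsTo_reducedF_Abar_inter_Omod {A : Set (ZMod d × ℤ)}
    (hφ : ∀ a ∈ A, reducedF d n m φ a ∈ Abar d n A) {h : ℕ} (hhm : h ∣ m) (hhn : h ∣ n)
    (k : ℤ) : Set.MapsTo (reducedF d n m φ) (Abar d n A ∩ Omod d h k) (Abar d n A ∩ Omod d h k) := by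
  rintro b ⟨hb, hbk⟩
  refine ⟨hφ b hb.1, ?_⟩
  rw [mem_Omod_iff] at hbk ⊢
  have hm0 : (if b.1 = 1 then (m : ℤ) else 0) ≡ 0 [ZMOD h] := by
    split_ifs
    · exact Int.modEq_zero_iff_dvd.2 (Int.natCast_dvd_natCast.2 hhm)
    · rfl
  have hn0 : φ b * n ≡ 0 [ZMOD h] :=
    Int.modEq_zero_iff_dvd.2 (dvd_mul_of_dvd_right (Int.natCast_dvd_natCast.2 hhn) _)
  rw [reducedF_snd]
  simpa using (hbk.add hm0).sub hn0

theorem natCast_mul_sum_eq_of_injOn {s : Finset (ZMod d × ℤ)}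
    (hmaps : Set.MapsTo (reducedF d n m φ) s s) (hinj : Set.InjOn (reducedF d n m φ) s) :
    (n : ℤ) * ∑ b ∈ s, φ b = m * (s.filter (·.1 = 1)).card := by
  have hperm : ∑ b ∈ s, (reducedF d n m φ b).2 = ∑ b ∈ s, b.2 :=
    Finset.sum_nbij _ hmaps hinj
      ((s.finite_toSet.injOn_iff_bijOn_of_mapsTo hmaps).1 hinj).surjOn fun _ _ => rfl
  simp only [reducedF_snd, Finset.sum_sub_distrib, Finset.sum_add_distrib, Finset.sum_ite,
    Finset.sum_const, nsmul_eq_mul, ← Finset.sum_mul] at hperm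
  linear_combination -hperm

end reducedF

theorem stmt17_general (d n m : ℕ) (hd : 1 ≤ d) (hn : 1 ≤ n)
    (A : Set (ZMod d × ℤ)) (hA : IsSemiModule d n m A)
    (φ : ZMod d × ℤ → ℤ)
    (hφ : ∀ a ∈ A, shiftO d (fO d m a) (-(φ a * (n : ℤ))) ∈ Abar d n A) :
    ∀ k : ℕ, 1 ≤ k → k ≤ Nat.gcd m n →
      ∑ᶠ b ∈ Abar d n A ∩ Omod d (Nat.gcd m n) (k : ℤ), φ b
        = ((m / Nat.gcd m n : ℕ) : ℤ) := by
  intro k _ _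
  have : NeZero d := ⟨by omega⟩
  obtain ⟨q, hq⟩ := Nat.gcd_dvd_right m n
  obtain ⟨m', hm'⟩ := Nat.gcd_dvd_left m n
  set h := Nat.gcd m n
  have hh0 : 0 < h := Nat.gcd_pos_of_pos_right m hn
  set S := Abar d n A ∩ Omod d h k
  have hS : S.Finite := hA.finite_Abar_inter_Omod hn (Nat.gcd_dvd_right m n) k
  have hmaps : Set.MapsTo (reducedF d n m φ) S S :=
    mapsTo_reducedF_Abar_inter_Omod hφ (Nat.gcd_dvd_left m n) (Nat.gcd_dvd_right m n) k
  have hbalance := natCast_mul_sum_eq_of_injOn (s := hS.toFinset) (by simpa using hmaps)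
    (hA.injOn_reducedF.mono (by simp [S, Set.inter_subset_left]))
  have hcount : (hS.toFinset.filter (·.1 = 1)).card = q := by
    rw [← Set.ncard_coe_finset, Finset.coe_filter]
    simp_rw [Set.Finite.mem_toFinset]
    rw [hA.ncard_Abar_inter_Omod_fst_eq hn (Nat.gcd_dvd_right m n)]
    exact Nat.div_eq_of_eq_mul_left hh0 (hq.trans (mul_comm _ _))
  have hq0 : q ≠ 0 := by rintro rfl; simp at hq; omega
  rw [finsum_mem_eq_finite_toFinset_sum _ hS, hm', Nat.mul_div_cancel_left _ hh0]
  rw [hcount, show (n : ℤ) = h * q by exact_mod_cast hq,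
    show (m : ℤ) = h * m' by exact_mod_cast hm'] at hbalance
  exact mul_left_cancel₀ (a := (h * q : ℤ)) (by simp [hh0.ne', hq0])
    (by linear_combination hbalance)

/-- For `1 ≤ k ≤ h = gcd(m, n)`, the sum of `φ_A b` over `b ∈ Ā^k` equals `m' = m/h`. -/
theorem stmt17 (d n m : ℕ) (hd : 1 ≤ d) (hn : 1 ≤ n) (hm : 1 ≤ m)
    (A : Set (ZMod d × ℤ)) (hA : IsSemiModule d n m A)
    (φ : ZMod d × ℤ → ℤ)
    (hφ : ∀ a ∈ A, shiftO d (fO d m a) (-(φ a * (n : ℤ))) ∈ Abar d n A) :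
    ∀ k : ℕ, 1 ≤ k → k ≤ Nat.gcd m n →
      ∑ᶠ b ∈ Abar d n A ∩ Omod d (Nat.gcd m n) (k : ℤ), φ b
        = ((m / Nat.gcd m n : ℕ) : ℤ) :=
  stmt17_general d n m hd hn A hA φ hφ
end
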